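/- arXiv:1808.01131 — 3 statements merged into one kernel-verified Lean document; each statement's English description precedes it below -/
import Mathlib

section
/- Let X be a real Banach space and let 𝒥 : X → ℝ be a C¹ functional satisfying the Palais–Smale condition with 𝒥(0) = 0. Suppose there exist constants ρ, α > 0 such that 𝒥(u) ≥ α for all u ∈ X with ‖u‖ = ρ, and there exists e ∈ X with ‖e‖ > ρ and 𝒥(e) ≤ 0. Let Γ be the set of continuous paths γ : [0,1] → X with γ(0) = 0 and γ(1) = e, and set c := inf_{γ ∈ Γ} max_{t ∈ [0,1]} 𝒥(γ(t)). Then c ≥ α and c is a critical value of 𝒥, i.e. there exists u ∈ X with 𝒥(u) = c and 𝒥′(u) = 0. -/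
/-!
Ekeland's variational principle, applied to `γ ↦ max J ∘ γ` on the complete metric space of
paths from `0` to `e` with the uniform distance, gives for every `ε > 0` a path `γ` with
`max J ∘ γ ≤ c + ε` whose maximum cannot be lowered by more than `ε` times the distance to any
other path. If `‖J'‖ > ε` at every maximum point of `γ`, a continuous descent field `v` (glued
from local choices by a partition of unity) vanishing at the endpoints makes `γ + δ • v` lower
the maximum by more than `ε δ`; hence some `u` on `γ` has `c ≤ J u ≤ c + ε` and `‖J' u‖ ≤ ε`.
Every path crosses the sphere `‖u‖ = ρ`, so `c ≥ α`, and the Palais–Smale condition turns these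
almost critical points into a critical point at level `c`.
-/

open Filter

/-- A C¹ functional `J` on a real normed space satisfies the Palais–Smale condition if every
sequence along which `J` is bounded and `‖J'‖ → 0` admits a convergent subsequence. -/
def PalaisSmale {X : Type*} [NormedAddCommGroup X] [NormedSpace ℝ X] (J : X → ℝ) : Prop :=
  ∀ u : ℕ → X, (∃ C : ℝ, ∀ n, |J (u n)| ≤ C) →
    Tendsto (fun n => ‖fderiv ℝ J (u n)‖) atTop (nhds 0) →
    ∃ φ : ℕ → ℕ, StrictMono φ ∧ ∃ v : X, Tendsto (fun n => u (φ n)) atTop (nhds v)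

open Set Topology

section Ekeland

variable {α : Type*} [MetricSpace α] {f : α → ℝ} {ε : ℝ}

def ekelandSet (f : α → ℝ) (ε : ℝ) (x : α) : Set α := {y | f y + ε * dist x y ≤ f x}

theorem mem_ekelandSet {x y : α} : y ∈ ekelandSet f ε x ↔ f y + ε * dist x y ≤ f x := Iff.rfl

theorem mem_ekelandSet_self (x : α) : x ∈ ekelandSet f ε x := by
  simp [mem_ekelandSet]

theorem ekelandSet_subset (hε : 0 ≤ ε) {x y : α} (hy : y ∈ ekelandSet f ε x) :
    ekelandSet f ε y ⊆ ekelandSet f ε x := fun z hz => by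
  have := mul_le_mul_of_nonneg_left (dist_triangle x y z) hε
  rw [mem_ekelandSet] at hy hz ⊢
  linarith

theorem isClosed_ekelandSet (hf : LowerSemicontinuous f) (x : α) :
    IsClosed (ekelandSet f ε x) :=
  (hf.add (continuous_const.mul (continuous_const.dist continuous_id)).lowerSemicontinuous
    ).isClosed_preimage (f x)

theorem exists_mem_ekelandSet_forall_mul_dist_le (hbdd : BddBelow (range f)) (hε : 0 ≤ ε)
    {r : ℝ} (hr : 0 < r) (x : α) :
    ∃ y ∈ ekelandSet f ε x, ∀ z ∈ ekelandSet f ε y, ε * dist y z ≤ r := by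
  have hne : (f '' ekelandSet f ε x).Nonempty := ⟨f x, x, mem_ekelandSet_self x, rfl⟩
  obtain ⟨_, ⟨y, hy, rfl⟩, hyr⟩ := exists_lt_of_csInf_lt hne (lt_add_of_pos_right _ hr)
  refine ⟨y, hy, fun z hz => ?_⟩
  have hinf : sInf (f '' ekelandSet f ε x) ≤ f z :=
    csInf_le (hbdd.mono (image_subset_range _ _)) ⟨z, ekelandSet_subset hε hy hz, rfl⟩
  rw [mem_ekelandSet] at hz
  linarith

theorem exists_seq_mem_ekelandSet (hbdd : BddBelow (range f)) (hε : 0 ≤ ε) (x₀ : α) :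
    ∃ x : ℕ → α, x 0 ∈ ekelandSet f ε x₀ ∧ (∀ n, x (n + 1) ∈ ekelandSet f ε (x n)) ∧
      ∀ n, ∀ y ∈ ekelandSet f ε (x n), ε * dist (x n) y ≤ 1 / (n + 1) := by
  choose next hnext hsmall using fun (n : ℕ) =>
    exists_mem_ekelandSet_forall_mul_dist_le hbdd hε (r := 1 / (n + 1)) (by positivity)
  let x : ℕ → α := fun n => Nat.rec (next 0 x₀) (fun n z => next (n + 1) z) n
  refine ⟨x, hnext 0 x₀, fun n => hnext (n + 1) (x n), fun n => ?_⟩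
  cases n with
  | zero => exact hsmall 0 x₀
  | succ n => exact_mod_cast hsmall (n + 1) (x n)

theorem LowerSemicontinuous.exists_le_forall_le_add_mul_dist [CompleteSpace α]
    (hf : LowerSemicontinuous f) (hbdd : BddBelow (range f)) (hε : 0 < ε) (x₀ : α) :
    ∃ x, f x ≤ f x₀ ∧ ∀ y, f x ≤ f y + ε * dist x y := by
  obtain ⟨x, hx₀, hsucc, hsmall⟩ := exists_seq_mem_ekelandSet hbdd hε.le x₀
  have hanti : Antitone fun n => ekelandSet f ε (x n) :=
    antitone_nat_of_succ_le fun n => ekelandSet_subset hε.le (hsucc n)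
  have hmem : ∀ n m, n ≤ m → x m ∈ ekelandSet f ε (x n) :=
    fun n m hnm => hanti hnm (mem_ekelandSet_self _)
  have hr : Tendsto (fun n : ℕ => 1 / ((n : ℝ) + 1)) atTop (𝓝 0) :=
    tendsto_one_div_add_atTop_nhds_zero_nat
  have hcauchy : CauchySeq x := by
    refine cauchySeq_of_le_tendsto_0' (fun n => 1 / ((n : ℝ) + 1) / ε)
      (fun n m hnm => (le_div_iff₀' hε).2 (hsmall n _ (hmem n m hnm))) ?_
    simpa using hr.div_const ε
  obtain ⟨z, hz⟩ := cauchySeq_tendsto_of_complete hcauchy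
  have hzS : ∀ n, z ∈ ekelandSet f ε (x n) := fun n =>
    (isClosed_ekelandSet hf _).mem_of_tendsto hz ((eventually_ge_atTop n).mono (hmem n))
  refine ⟨z, ?_, fun y => ?_⟩
  · have := ekelandSet_subset hε.le hx₀ (hzS 0)
    rw [mem_ekelandSet] at this
    linarith [mul_nonneg hε.le (dist_nonneg (x := x₀) (y := z))]
  · by_contra! hy
    have hyS : ∀ n, y ∈ ekelandSet f ε (x n) := fun n =>
      ekelandSet_subset hε.le (hzS n) (show f y + ε * dist z y ≤ f z by linarith)
    have hbound : ∀ n : ℕ, ε * dist z y ≤ 2 * (1 / ((n : ℝ) + 1)) := fun n => by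
      have := mul_le_mul_of_nonneg_left (dist_triangle_left z y (x n)) hε.le
      linarith [hsmall n z (hzS n), hsmall n y (hyS n)]
    have hzero : ε * dist z y ≤ 0 := ge_of_tendsto' (by simpa using hr.const_mul 2) hbound
    have : dist z y = 0 := le_antisymm (nonpos_of_mul_nonpos_right hzero hε) dist_nonneg
    rw [dist_eq_zero.1 this] at hy
    simp at hy

end Ekeland

theorem ContinuousLinearMap.exists_norm_le_one_apply_lt_neg {E : Type*} [NormedAddCommGroup E]
    [NormedSpace ℝ E] (L : E →L[ℝ] ℝ) {m : ℝ} (hm : m < ‖L‖) : ∃ w, ‖w‖ ≤ 1 ∧ L w < -m := by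
  obtain ⟨w, hw, hmw⟩ := L.exists_lt_apply_of_lt_opNorm hm
  rcases le_or_gt 0 (L w) with h | h
  · refine ⟨-w, by simpa using hw.le, ?_⟩
    rw [Real.norm_of_nonneg h] at hmw
    simpa using hmw
  · refine ⟨w, hw.le, ?_⟩
    rw [Real.norm_of_nonpos h.le] at hmw
    linarith

theorem exists_continuous_descent_field {T E : Type*} [TopologicalSpace T] [NormalSpace T]
    [ParacompactSpace T] [NormedAddCommGroup E] [NormedSpace ℝ E] {L : T → E →L[ℝ] ℝ}
    (hL : Continuous L) {K Z : Set T} (hK : IsClosed K) (hZ : IsClosed Z) (hKZ : Disjoint K Z)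
    {m : ℝ} (hm : ∀ s ∈ K, m < ‖L s‖) :
    ∃ v : C(T, E), (∀ s, ‖v s‖ ≤ 1) ∧ (∀ s ∈ K, L s (v s) < -m) ∧ ∀ s ∈ Z, v s = 0 := by
  let t : T → Set E := fun s =>
    Metric.closedBall 0 1 ∩ {w | s ∈ K → L s w < -m} ∩ {w | s ∈ Z → w = 0}
  have ht : ∀ s, Convex ℝ (t s) := by
    intro s
    refine ((convex_closedBall 0 1).inter ?_).inter ?_
    · by_cases hs : s ∈ K
      · simpa [hs] using convex_halfSpace_lt (L s).isLinear (-m)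
      · simp [hs, convex_univ]
    · by_cases hs : s ∈ Z
      · simp [hs, convex_singleton]
      · simp [hs, convex_univ]
  have hlocal : ∀ s, ∃ w : E, ∀ᶠ s' in 𝓝 s, w ∈ t s' := by
    intro s
    by_cases hs : s ∈ K
    · obtain ⟨w, hw, hLw⟩ := (L s).exists_norm_le_one_apply_lt_neg (hm s hs)
      have hLw' : ∀ᶠ s' in 𝓝 s, L s' w < -m :=
        (hL.clm_apply continuous_const).continuousAt.eventually_lt continuousAt_const hLw
      refine ⟨w, ?_⟩
      filter_upwards [hLw', hZ.isOpen_compl.mem_nhds (hKZ.notMem_of_mem_left hs)]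
        with s' hs'w hs'Z
      exact ⟨⟨by simpa using hw, fun _ => hs'w⟩, fun h => absurd h hs'Z⟩
    · refine ⟨0, ?_⟩
      filter_upwards [hK.isOpen_compl.mem_nhds hs] with s' hs'K
      exact ⟨⟨by simp, fun h => absurd h hs'K⟩, fun _ => rfl⟩
  obtain ⟨v, hv⟩ := exists_continuous_forall_mem_convex_of_local_const ht hlocal
  exact ⟨v, fun s => by simpa using (hv s).1.1, fun s hs => (hv s).1.2 hs, fun s hs => (hv s).2 hs⟩

section Descent

variable {X : Type*} [NormedAddCommGroup X] [NormedSpace ℝ X]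

theorem le_add_mul_of_fderiv_apply_le {J : X → ℝ} (hJ : Differentiable ℝ J) {x w : X} {a δ : ℝ}
    (hδ : 0 ≤ δ) (h : ∀ b ∈ Ioo 0 δ, fderiv ℝ J (x + b • w) w ≤ a) :
    J (x + δ • w) ≤ J x + a * δ := by
  have hline : ∀ b : ℝ, HasDerivAt (fun b : ℝ => x + b • w) w b := fun b => by
    simpa using ((hasDerivAt_id b).smul_const w).const_add x
  have hderiv : ∀ b : ℝ, HasDerivAt (fun b => J (x + b • w)) (fderiv ℝ J (x + b • w) w) b :=
    fun b => (hJ _).hasFDerivAt.comp_hasDerivAt b (hline b)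
  have := (convex_Icc 0 δ).image_sub_le_mul_sub_of_deriv_le
    (fun b _ => (hderiv b).continuousAt.continuousWithinAt)
    (fun b _ => (hderiv b).differentiableAt.differentiableWithinAt)
    (fun b hb => by rw [interior_Icc] at hb; rw [(hderiv b).deriv]; exact h b hb)
    0 (left_mem_Icc.2 hδ) δ (right_mem_Icc.2 hδ) hδ
  simp only [zero_smul, add_zero, sub_zero] at this
  linarith

variable {T : Type*} [TopologicalSpace T] {J : X → ℝ} {γ v : C(T, X)} {Φ ε : ℝ}

theorem eventually_add_smul_add_mul_lt (hJ : ContDiff ℝ 1 J) (hle : ∀ s, J (γ s) ≤ Φ)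
    (hdesc : ∀ s, Φ ≤ J (γ s) → fderiv ℝ J (γ s) (v s) < -ε) (s : T) :
    ∀ᶠ p : ℝ × T in 𝓝[>] 0 ×ˢ 𝓝 s, J (γ p.2 + p.1 • v p.2) + ε * p.1 < Φ := by
  have hcont : Continuous fun p : ℝ × T => γ p.2 + p.1 • v p.2 :=
    (γ.continuous.comp continuous_snd).add (continuous_fst.smul (v.continuous.comp continuous_snd))
  have hle_nhds : 𝓝[>] (0 : ℝ) ×ˢ 𝓝 s ≤ 𝓝 (0, s) := by
    rw [nhds_prod_eq]; exact prod_mono nhdsWithin_le_nhds le_rfl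
  rcases lt_or_ge (J (γ s)) Φ with hs | hs
  · have hG : Continuous fun p : ℝ × T => J (γ p.2 + p.1 • v p.2) + ε * p.1 :=
      (hJ.continuous.comp hcont).add (continuous_const.mul continuous_fst)
    exact hle_nhds (hG.continuousAt.eventually_lt continuousAt_const (by simpa using hs))
  · obtain ⟨a, hsa, haε⟩ := exists_between (hdesc s hs)
    have hΨ : Continuous fun p : ℝ × T => fderiv ℝ J (γ p.2 + p.1 • v p.2) (v p.2) :=
      ((hJ.continuous_fderiv one_ne_zero).comp hcont).clm_apply (v.continuous.comp continuous_snd)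
    have hev : ∀ᶠ p : ℝ × T in 𝓝 (0, s), fderiv ℝ J (γ p.2 + p.1 • v p.2) (v p.2) < a :=
      hΨ.continuousAt.eventually_lt continuousAt_const (by simpa using hsa)
    rw [nhds_prod_eq, eventually_prod_iff] at hev
    obtain ⟨pa, hpa, ps, hps, hP⟩ := hev
    obtain ⟨r, hr, hball⟩ := Metric.eventually_nhds_iff_ball.1 hpa
    refine eventually_prod_iff.2 ⟨(· ∈ Ioo 0 r), Ioo_mem_nhdsGT hr, ps, hps, ?_⟩
    rintro δ ⟨hδ, hδr⟩ s' hs'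
    have hmvt := le_add_mul_of_fderiv_apply_le (hJ.differentiable one_ne_zero) hδ.le
      (x := γ s') (w := v s') (a := a) fun b hb => (hP (hball b ?_) hs').le
    · linarith [hle s', mul_lt_mul_of_pos_right haε hδ]
    · rw [Metric.mem_ball, Real.dist_0_eq_abs, abs_of_pos hb.1]; exact hb.2.trans hδr

theorem exists_pos_forall_add_smul_add_mul_lt [CompactSpace T] (hJ : ContDiff ℝ 1 J)
    (hle : ∀ s, J (γ s) ≤ Φ) (hdesc : ∀ s, Φ ≤ J (γ s) → fderiv ℝ J (γ s) (v s) < -ε) :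
    ∃ δ > 0, ∀ s, J (γ s + δ • v s) + ε * δ < Φ := by
  have := isCompact_univ.mem_prod_nhdsSet_of_forall
    fun s _ => eventually_add_smul_add_mul_lt hJ hle hdesc s
  rw [nhdsSet_univ, Filter.mem_prod_top] at this
  exact (Filter.Eventually.and this self_mem_nhdsWithin).exists.imp fun δ h => ⟨h.2, h.1⟩

end Descent

section SupAlongMaps

variable {T X : Type*} [TopologicalSpace T] [CompactSpace T] [TopologicalSpace X] {J : X → ℝ}

theorem bddAbove_range_comp (hJ : Continuous J) (γ : C(T, X)) :
    BddAbove (range fun t => J (γ t)) :=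
  (isCompact_range (hJ.comp γ.continuous)).bddAbove

theorem lowerSemicontinuous_iSup_comp (hJ : Continuous J) :
    LowerSemicontinuous fun γ : C(T, X) => ⨆ t, J (γ t) :=
  lowerSemicontinuous_ciSup (bddAbove_range_comp hJ)
    fun t => (hJ.comp (continuous_eval_const t)).lowerSemicontinuous

variable [Nonempty T]

theorem iSup_comp_lt (hJ : Continuous J) (γ : C(T, X)) {a : ℝ} (h : ∀ t, J (γ t) < a) :
    ⨆ t, J (γ t) < a := by
  have := (isCompact_univ.sSup_lt_iff_of_continuous univ_nonempty
    (hJ.comp γ.continuous).continuousOn a).2 fun t _ => h t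
  rwa [image_univ, sSup_range] at this

end SupAlongMaps

section Minimax

variable {T X : Type*} [TopologicalSpace T] [CompactSpace T] [Nonempty T] [T2Space T]
  [NormedAddCommGroup X] [NormedSpace ℝ X] {J : X → ℝ}

theorem exists_eqOn_iSup_add_mul_dist_lt (hJ : ContDiff ℝ 1 J) (γ : C(T, X)) {Z : Set T}
    (hZ : IsClosed Z) {ε : ℝ} (hε : 0 ≤ ε) (hZmax : ∀ s ∈ Z, J (γ s) < ⨆ t, J (γ t))
    (hcrit : ∀ s, J (γ s) = ⨆ t, J (γ t) → ε < ‖fderiv ℝ J (γ s)‖) :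
    ∃ η : C(T, X), EqOn η γ Z ∧ (⨆ t, J (η t)) + ε * dist γ η < ⨆ t, J (γ t) := by
  set Φ := ⨆ t, J (γ t)
  have hle : ∀ s, J (γ s) ≤ Φ := le_ciSup (bddAbove_range_comp hJ.continuous γ)
  have hK : IsClosed {s | Φ ≤ J (γ s)} :=
    isClosed_le continuous_const (hJ.continuous.comp γ.continuous)
  have hKZ : Disjoint {s | Φ ≤ J (γ s)} Z :=
    disjoint_left.2 fun s hsK hsZ => (hZmax s hsZ).not_ge hsK
  obtain ⟨v, hv1, hvK, hvZ⟩ := exists_continuous_descent_field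
    ((hJ.continuous_fderiv one_ne_zero).comp γ.continuous) hK hZ hKZ
    fun s hs => hcrit s (le_antisymm (hle s) hs)
  obtain ⟨δ, hδ, hδlt⟩ := exists_pos_forall_add_smul_add_mul_lt hJ hle fun s hs => hvK s hs
  refine ⟨γ + δ • v, fun s hs => by simp [hvZ s hs], ?_⟩
  have hdist : dist γ (γ + δ • v) ≤ δ := (ContinuousMap.dist_le hδ.le).2 fun s => by
    simpa [dist_eq_norm, norm_smul, abs_of_pos hδ] using mul_le_of_le_one_right hδ.le (hv1 s)
  have hsup : ⨆ t, J ((γ + δ • v) t) < Φ - ε * δ :=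
    iSup_comp_lt hJ.continuous _ fun s => by
      simp only [ContinuousMap.add_apply, ContinuousMap.smul_apply]
      linarith [hδlt s]
  linarith [mul_le_mul_of_nonneg_left hdist hε]

theorem exists_almost_critical_of_isGLB [CompleteSpace X] (hJ : ContDiff ℝ 1 J) {Z : Set T}
    (hZ : IsClosed Z) {Γ : Set C(T, X)} (hΓ : IsClosed Γ)
    (hΓZ : ∀ γ ∈ Γ, ∀ η : C(T, X), EqOn η γ Z → η ∈ Γ) {c : ℝ}
    (hc : IsGLB ((fun γ => ⨆ t, J (γ t)) '' Γ) c) (hZc : ∀ γ ∈ Γ, ∀ s ∈ Z, J (γ s) < c)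
    {ε : ℝ} (hε : 0 < ε) : ∃ u, c ≤ J u ∧ J u ≤ c + ε ∧ ‖fderiv ℝ J u‖ ≤ ε := by
  have : CompleteSpace Γ := hΓ.completeSpace_coe
  have hcΦ : ∀ γ ∈ Γ, c ≤ ⨆ t, J (γ t) := fun γ hγ => hc.1 ⟨γ, hγ, rfl⟩
  obtain ⟨_, ⟨γ₀, hγ₀, rfl⟩, -, hγ₀c⟩ := hc.exists_between (lt_add_of_pos_right c hε)
  have hlsc : LowerSemicontinuous fun γ : Γ => ⨆ t, J (γ.1 t) :=
    (lowerSemicontinuous_iSup_comp hJ.continuous).comp continuous_subtype_val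
  obtain ⟨γ, hγγ₀, hγmin⟩ := hlsc.exists_le_forall_le_add_mul_dist
    ⟨c, forall_mem_range.2 fun γ : Γ => hcΦ γ γ.2⟩ hε ⟨γ₀, hγ₀⟩
  by_contra! hcrit
  obtain ⟨η, hηZ, hηlt⟩ := exists_eqOn_iSup_add_mul_dist_lt hJ γ.1 hZ hε.le
    (fun s hs => (hZc _ γ.2 s hs).trans_le (hcΦ _ γ.2))
    fun s hs => hcrit _ (hs ▸ hcΦ _ γ.2) (by simp only at hγγ₀; linarith)
  have := hγmin ⟨η, hΓZ _ γ.2 η hηZ⟩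
  simp only [Subtype.dist_eq] at this
  linarith

end Minimax

section PathLevels

variable {X : Type*} [TopologicalSpace X]

open unitInterval in
theorem setOf_sSup_image_Icc_eq_image_iSup (J : X → ℝ) (x y : X) :
    {r : ℝ | ∃ γ : ℝ → X, ContinuousOn γ (Icc 0 1) ∧ γ 0 = x ∧ γ 1 = y ∧
      r = sSup ((fun t => J (γ t)) '' Icc 0 1)} =
      (fun γ : C(I, X) => ⨆ t, J (γ t)) '' {γ | γ 0 = x ∧ γ 1 = y} := by
  ext r
  constructor
  · rintro ⟨γ, hγ, h0, h1, rfl⟩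
    exact ⟨⟨fun t => γ t, hγ.domRestrict⟩, ⟨h0, h1⟩, (sSup_image' (f := fun t => J (γ t))).symm⟩
  · rintro ⟨γ, ⟨h0, h1⟩, rfl⟩
    refine ⟨IccExtend zero_le_one γ, γ.continuous.Icc_extend'.continuousOn, ?_, ?_, ?_⟩
    · simpa [IccExtend_left] using h0
    · simpa [IccExtend_right] using h1
    · simp only [sSup_image', IccExtend_val]

end PathLevels

section PalaisSmale

variable {X : Type*} [NormedAddCommGroup X] [NormedSpace ℝ X] {J : X → ℝ}

theorem PalaisSmale.exists_eq_and_fderiv_eq_zero (hPS : PalaisSmale J) (hJ : ContDiff ℝ 1 J)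
    {c : ℝ} (h : ∀ ε > 0, ∃ u, |J u - c| ≤ ε ∧ ‖fderiv ℝ J u‖ ≤ ε) :
    ∃ u, J u = c ∧ fderiv ℝ J u = 0 := by
  choose u hu using fun n : ℕ => h (1 / (n + 1)) Nat.one_div_pos_of_nat
  have hr : Tendsto (fun n : ℕ => 1 / ((n : ℝ) + 1)) atTop (𝓝 0) :=
    tendsto_one_div_add_atTop_nhds_zero_nat
  have hJu : Tendsto (fun n => J (u n)) atTop (𝓝 c) :=
    tendsto_iff_norm_sub_tendsto_zero.2 <|
      squeeze_zero (fun _ => norm_nonneg _) (fun n => (hu n).1) hr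
  have hdJu : Tendsto (fun n => ‖fderiv ℝ J (u n)‖) atTop (𝓝 0) :=
    squeeze_zero (fun _ => norm_nonneg _) (fun n => (hu n).2) hr
  obtain ⟨C, hC⟩ := hJu.abs.bddAbove_range
  obtain ⟨φ, hφ, v, hv⟩ := hPS u ⟨C, fun n => hC ⟨n, rfl⟩⟩ hdJu
  refine ⟨v, tendsto_nhds_unique ((hJ.continuous.tendsto v).comp hv)
    (hJu.comp hφ.tendsto_atTop), ?_⟩
  exact norm_eq_zero.1 <| tendsto_nhds_unique
    (((hJ.continuous_fderiv one_ne_zero).tendsto v).norm.comp hv) (hdJu.comp hφ.tendsto_atTop)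

end PalaisSmale

theorem le_iSup_comp_of_norm_le_of_le_norm {T X : Type*} [TopologicalSpace T] [CompactSpace T]
    [PreconnectedSpace T] [NormedAddCommGroup X] {J : X → ℝ} (hJ : Continuous J) {ρ α : ℝ}
    (hsphere : ∀ u : X, ‖u‖ = ρ → α ≤ J u)
    (γ : C(T, X)) {a b : T} (ha : ‖γ a‖ ≤ ρ) (hb : ρ ≤ ‖γ b‖) : α ≤ ⨆ t, J (γ t) := by
  obtain ⟨t, ht⟩ := intermediate_value_univ a b (continuous_norm.comp γ.continuous) ⟨ha, hb⟩
  exact (hsphere _ ht).trans (le_ciSup (bddAbove_range_comp hJ γ) t)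

/-- Mountain pass theorem of Ambrosetti and Rabinowitz: the mountain pass level
`c = inf_{γ ∈ Γ} max_{t ∈ [0,1]} J(γ(t))` satisfies `c ≥ α` and is a critical value of `J`. -/
theorem mountain_pass
    {X : Type*} [NormedAddCommGroup X] [NormedSpace ℝ X] [CompleteSpace X]
    (J : X → ℝ) (hJ : ContDiff ℝ 1 J) (hPS : PalaisSmale J) (hJ0 : J 0 = 0)
    (ρ α : ℝ) (hρ : 0 < ρ) (hα : 0 < α)
    (hsphere : ∀ u : X, ‖u‖ = ρ → α ≤ J u)
    (e : X) (he : ρ < ‖e‖) (hJe : J e ≤ 0)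
    (c : ℝ)
    (hc : c = sInf {r : ℝ | ∃ γ : ℝ → X, ContinuousOn γ (Set.Icc 0 1) ∧ γ 0 = 0 ∧ γ 1 = e ∧
      r = sSup ((fun t => J (γ t)) '' Set.Icc 0 1)}) :
    α ≤ c ∧ ∃ u : X, J u = c ∧ fderiv ℝ J u = 0 := by
  set Γ : Set C(unitInterval, X) := {γ | γ 0 = 0 ∧ γ 1 = e}
  have hαΓ : ∀ γ ∈ Γ, α ≤ ⨆ t, J (γ t) := fun γ hγ =>
    le_iSup_comp_of_norm_le_of_le_norm hJ.continuous hsphere γ (a := 0) (b := 1)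
      (by simp [hγ.1, hρ.le]) (hγ.2 ▸ he.le)
  have hΓne : Γ.Nonempty := ⟨⟨fun t => (t : ℝ) • e, by fun_prop⟩, by simp, by simp⟩
  have hglb : IsGLB ((fun γ : C(unitInterval, X) => ⨆ t, J (γ t)) '' Γ) c := by
    rw [hc, setOf_sSup_image_Icc_eq_image_iSup]
    exact isGLB_csInf (hΓne.image _) ⟨α, forall_mem_image.2 hαΓ⟩
  have hαc : α ≤ c := hglb.2 (forall_mem_image.2 hαΓ)
  refine ⟨hαc, hPS.exists_eq_and_fderiv_eq_zero hJ fun ε hε => ?_⟩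
  have hΓ : IsClosed Γ := (isClosed_eq (continuous_eval_const 0) continuous_const).inter
    (isClosed_eq (continuous_eval_const 1) continuous_const)
  have hΓZ : ∀ γ ∈ Γ, ∀ η : C(unitInterval, X), EqOn η γ {0, 1} → η ∈ Γ :=
    fun γ hγ η hη => ⟨(hη (by simp)).trans hγ.1, (hη (by simp)).trans hγ.2⟩
  have hZc : ∀ γ ∈ Γ, ∀ s ∈ ({0, 1} : Set unitInterval), J (γ s) < c := by
    rintro γ ⟨hγ0, hγ1⟩ s (rfl | rfl)
    · rw [hγ0, hJ0]; linarith
    · rw [hγ1]; linarith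
  obtain ⟨u, hcu, huc, hdu⟩ :=
    exists_almost_critical_of_isGLB hJ (toFinite _).isClosed hΓ hΓZ hglb hZc hε
  exact ⟨u, abs_le.2 ⟨by linarith, by linarith⟩, hdu⟩
end

section
/- Let f : ℝ → ℝ be continuous and set F(u) := ∫₀^u f(t) dt. Suppose there exist μ > 1 and M > 0 such that 0 < μ F(u) ≤ u f(u) for all u ≥ M. Then there exist positive constants C₁ and C₂ such that f(u) ≥ C₁ u^{μ−1} − C₂ for all u ≥ 0, and consequently F(u) ≥ (C₁/μ) u^μ − C₂ u for all u ≥ 0. -/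
/-- If `f` is continuous with primitive `F(u) = ∫₀ᵘ f` and the Ambrosetti–Rabinowitz
condition `0 < μ F(u) ≤ u f(u)` holds for `u ≥ M` with `μ > 1`, then there are positive
constants `C₁, C₂` such that `f(u) ≥ C₁ u^{μ-1} - C₂` and `F(u) ≥ (C₁/μ) u^μ - C₂ u`
for all `u ≥ 0`. -/
theorem lower_bounds_from_AR (f : ℝ → ℝ) (hf : Continuous f)
    (F : ℝ → ℝ) (hF : ∀ u : ℝ, F u = ∫ t in (0:ℝ)..u, f t)
    (μ M : ℝ) (hμ : 1 < μ) (hM : 0 < M)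
    (hAR : ∀ u : ℝ, M ≤ u → 0 < μ * F u ∧ μ * F u ≤ u * f u) :
    ∃ C₁ > (0 : ℝ), ∃ C₂ > (0 : ℝ),
      (∀ u : ℝ, 0 ≤ u → C₁ * u ^ (μ - 1) - C₂ ≤ f u) ∧
      (∀ u : ℝ, 0 ≤ u → C₁ / μ * u ^ μ - C₂ * u ≤ F u) := by
  have hμ0 : (0:ℝ) < μ := by linarith
  -- FTC : F has derivative f
  have hFeq : F = fun u => ∫ t in (0:ℝ)..u, f t := funext hF
  have hFd : ∀ u : ℝ, HasDerivAt F (f u) u := by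
    intro u
    rw [hFeq]
    exact intervalIntegral.integral_hasDerivAt_right (hf.intervalIntegrable _ _)
      (hf.stronglyMeasurableAtFilter _ _) hf.continuousAt
  -- F M > 0
  have hFM : 0 < F M := by nlinarith [(hAR M le_rfl).1]
  -- monotonicity of g = F u * u^(-μ) on [M, ∞)
  set g : ℝ → ℝ := fun u => F u * u ^ (-μ) with hg
  have hgd : ∀ x : ℝ, 0 < x →
      HasDerivAt g (f x * x ^ (-μ) + F x * (-μ * x ^ (-μ - 1))) x := by
    intro x hx
    exact (hFd x).mul (Real.hasDerivAt_rpow_const (Or.inl hx.ne'))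
  have hgc : ContinuousOn g (Set.Ici M) := by
    intro x hx
    have hx0 : (0:ℝ) < x := lt_of_lt_of_le hM hx
    exact ((hgd x hx0).continuousAt).continuousWithinAt
  have hmono : MonotoneOn g (Set.Ici M) := by
    apply monotoneOn_of_deriv_nonneg (convex_Ici M) hgc
    · intro x hx
      rw [interior_Ici] at hx
      exact ((hgd x (lt_trans hM hx)).differentiableAt).differentiableWithinAt
    intro x hx
    rw [interior_Ici] at hx
    have hx0 : (0:ℝ) < x := lt_trans hM hx
    rw [(hgd x hx0).deriv]
    have ht : (0:ℝ) < x ^ (-μ - 1) := Real.rpow_pos_of_pos hx0 _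
    have hxe : x ^ (-μ) = x ^ (-μ - 1) * x := by
      rw [← Real.rpow_add_one hx0.ne' (-μ - 1)]; ring_nf
    have hAR2 := (hAR x hx.le).2
    rw [hxe]
    nlinarith [mul_le_mul_of_nonneg_left hAR2 ht.le]
  -- lower bound F u ≥ c u^μ for u ≥ M
  set c : ℝ := F M * M ^ (-μ) with hc
  have hc0 : 0 < c := mul_pos hFM (Real.rpow_pos_of_pos hM _)
  have hFlow : ∀ u : ℝ, M ≤ u → c * u ^ μ ≤ F u := by
    intro u hu
    have hu0 : (0:ℝ) < u := lt_of_lt_of_le hM hu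
    have h1 : c ≤ F u * u ^ (-μ) := hmono (Set.self_mem_Ici) hu hu
    have h2 : u ^ (-μ) * u ^ μ = 1 := by
      rw [← Real.rpow_add hu0]; simp
    have h3 : (0:ℝ) < u ^ μ := Real.rpow_pos_of_pos hu0 _
    calc c * u ^ μ ≤ F u * u ^ (-μ) * u ^ μ := by nlinarith
      _ = F u := by rw [mul_assoc, h2, mul_one]
  -- bound of f on [0, M]
  obtain ⟨B, hB⟩ := (isCompact_Icc (a := (0:ℝ)) (b := M)).exists_bound_of_continuousOn
    hf.continuousOn
  set B' : ℝ := max B 0 with hB'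
  have hB'0 : 0 ≤ B' := le_max_right _ _
  have hfB : ∀ x ∈ Set.Icc (0:ℝ) M, -B' ≤ f x := by
    intro x hx
    have := hB x hx
    have h1 : |f x| ≤ B' := le_trans (by simpa using this) (le_max_left _ _)
    linarith [neg_abs_le (f x)]
  -- constants
  have hM1 : (0:ℝ) < M ^ (μ - 1) := Real.rpow_pos_of_pos hM _
  have hC2pos : (0:ℝ) < μ * c * M ^ (μ - 1) + B' + 1 := by
    nlinarith [mul_pos (mul_pos hμ0 hc0) hM1]
  refine ⟨μ * c, mul_pos hμ0 hc0, μ * c * M ^ (μ - 1) + B' + 1, hC2pos, ?_, ?_⟩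
  · -- f bound
    intro u hu
    rcases le_or_gt M u with huM | huM
    · have hu0 : (0:ℝ) < u := lt_of_lt_of_le hM huM
      have h1 := (hAR u huM).2
      have h2 := hFlow u huM
      have h3 : u ^ μ = u ^ (μ - 1) * u := by
        rw [← Real.rpow_add_one hu0.ne' (μ - 1)]; ring_nf
      have h4 : u * (μ * c * u ^ (μ - 1)) ≤ u * f u := by
        calc u * (μ * c * u ^ (μ - 1)) = μ * (c * u ^ μ) := by rw [h3]; ring
          _ ≤ μ * F u := by nlinarith
          _ ≤ u * f u := h1
      have h5 : μ * c * u ^ (μ - 1) ≤ f u := le_of_mul_le_mul_left h4 hu0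
      linarith
    · have h1 : -B' ≤ f u := hfB u ⟨hu, huM.le⟩
      have h2 : u ^ (μ - 1) ≤ M ^ (μ - 1) :=
        Real.rpow_le_rpow hu huM.le (by linarith)
      nlinarith [mul_le_mul_of_nonneg_left h2 (le_of_lt (mul_pos hμ0 hc0))]
  · -- F bound
    intro u hu
    rcases le_or_gt M u with huM | huM
    · have h1 := hFlow u huM
      have h2 : μ * c / μ = c := by field_simp
      have h3 : (0:ℝ) ≤ u := le_trans hM.le huM
      rw [h2]
      nlinarith [mul_nonneg hC2pos.le h3]
    · -- u ∈ [0, M): F u ≥ -B' u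
      have hFu : -B' * u ≤ F u := by
        rw [hF u]
        have : ∀ x ∈ Set.Icc (0:ℝ) u, -B' ≤ f x := fun x hx =>
          hfB x ⟨hx.1, le_trans hx.2 huM.le⟩
        calc -B' * u = ∫ _ in (0:ℝ)..u, -B' := by
              rw [intervalIntegral.integral_const]; simp [mul_comm]
          _ ≤ ∫ t in (0:ℝ)..u, f t :=
              intervalIntegral.integral_mono_on hu (intervalIntegrable_const)
                (hf.intervalIntegrable _ _) this
      have huμ : u ^ μ ≤ M ^ (μ - 1) * u := by
        rcases eq_or_lt_of_le hu with h | h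
        · rw [← h, Real.zero_rpow (by positivity : μ ≠ 0)]; simp
        · have h3 : u ^ μ = u ^ (μ - 1) * u := by
            rw [← Real.rpow_add_one h.ne' (μ - 1)]; ring_nf
          have h4 : u ^ (μ - 1) ≤ M ^ (μ - 1) :=
            Real.rpow_le_rpow hu huM.le (by linarith)
          rw [h3]; nlinarith
      have hcd : μ * c / μ = c := by field_simp
      rw [hcd]
      nlinarith [mul_le_mul_of_nonneg_left huμ hc0.le,
        mul_nonneg (mul_nonneg (mul_nonneg (sub_nonneg.mpr hμ.le) hc0.le) hM1.le) hu,
        mul_nonneg hB'0 hu]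
end

section
/- For every integer N ≥ 1, every real number p ≥ 2, and all vectors x, y ∈ ℝ^N, the Simon-type inequality ⟨|x|^{p−2} x − |y|^{p−2} y, x − y⟩ ≥ 4^{1−p} |x − y|^p holds, where ⟨·,·⟩ is the Euclidean inner product, |·| is the Euclidean norm, and |z|^{p−2} z is interpreted as 0 when z = 0. -/
/-!
Write `s = |x|^{p-2}`, `t = |y|^{p-2}`. Polarization gives
`⟨s x - t y, x - y⟩ = (s + t)/2 · |x - y|² + (s - t)/2 · (|x|² - |y|²)`, and the second term is
nonnegative because `r ↦ r^{p-2}` is monotone. On the other hand `|x - y| ≤ |x| + |y|`, so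
`|x - y|^{p-2} ≤ 2^{p-2} (s + t)`, whence
`4^{1-p} |x - y|^p ≤ 2^{-p} (s + t) |x - y|² ≤ (s + t)/2 · |x - y|²`.
-/

open Real

lemma Real.add_rpow_le_two_rpow_mul_rpow_add_rpow {a b r : ℝ} (ha : 0 ≤ a) (hb : 0 ≤ b)
    (hr : 0 ≤ r) : (a + b) ^ r ≤ 2 ^ r * (a ^ r + b ^ r) := calc
  (a + b) ^ r ≤ (2 * max a b) ^ r := by
    gcongr
    rw [two_mul]
    exact add_le_add (le_max_left a b) (le_max_right a b)
  _ = 2 ^ r * max (a ^ r) (b ^ r) := by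
    rw [mul_rpow zero_le_two (le_max_of_le_left ha), rpow_max ha hb hr]
  _ ≤ 2 ^ r * (a ^ r + b ^ r) := by
    gcongr
    exact max_le_add_of_nonneg (rpow_nonneg ha r) (rpow_nonneg hb r)

lemma Real.rpow_sub_rpow_mul_sq_sub_sq_nonneg {a b r : ℝ} (ha : 0 ≤ a) (hb : 0 ≤ b)
    (hr : 0 ≤ r) : 0 ≤ (a ^ r - b ^ r) * (a ^ 2 - b ^ 2) := by
  rcases le_total a b with hab | hba
  · exact mul_nonneg_of_nonpos_of_nonpos
      (sub_nonpos.2 (rpow_le_rpow ha hab hr)) (sub_nonpos.2 (pow_le_pow_left₀ ha hab 2))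
  · exact mul_nonneg
      (sub_nonneg.2 (rpow_le_rpow hb hba hr)) (sub_nonneg.2 (pow_le_pow_left₀ hb hba 2))

lemma Real.four_rpow_one_sub_mul_two_rpow_sub_two_le {p : ℝ} (hp : 2 ≤ p) :
    (4 : ℝ) ^ (1 - p) * 2 ^ (p - 2) ≤ 1 / 2 := by
  have h4 : (4 : ℝ) = 2 ^ (2 : ℝ) := by norm_num
  rw [h4, ← rpow_mul zero_le_two, ← rpow_add zero_lt_two]
  calc (2 : ℝ) ^ (2 * (1 - p) + (p - 2)) ≤ 2 ^ (-1 : ℝ) :=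
        rpow_le_rpow_of_exponent_le one_le_two (by linarith)
    _ = 1 / 2 := by norm_num

lemma norm_sub_rpow_le {E : Type*} [SeminormedAddCommGroup E] {p : ℝ} (hp : 2 ≤ p) (x y : E) :
    ‖x - y‖ ^ p ≤ 2 ^ (p - 2) * (‖x‖ ^ (p - 2) + ‖y‖ ^ (p - 2)) * ‖x - y‖ ^ 2 := by
  rcases (norm_nonneg (x - y)).eq_or_lt with hxy | hxy
  · rw [← hxy, zero_rpow (by linarith)]
    simp
  have hr : 0 ≤ p - 2 := by linarith
  calc ‖x - y‖ ^ p = ‖x - y‖ ^ (p - 2) * ‖x - y‖ ^ 2 := by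
        rw [← rpow_natCast, ← rpow_add hxy]
        norm_num
    _ ≤ (‖x‖ + ‖y‖) ^ (p - 2) * ‖x - y‖ ^ 2 := by
        gcongr
        exact norm_sub_le x y
    _ ≤ 2 ^ (p - 2) * (‖x‖ ^ (p - 2) + ‖y‖ ^ (p - 2)) * ‖x - y‖ ^ 2 := by
        gcongr
        exact add_rpow_le_two_rpow_mul_rpow_add_rpow (norm_nonneg x) (norm_nonneg y) hr

section InnerProductSpace

variable {E : Type*} [NormedAddCommGroup E] [InnerProductSpace ℝ E]

lemma inner_smul_sub_smul_sub_eq (s t : ℝ) (x y : E) :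
    inner ℝ (s • x - t • y) (x - y) =
      (s + t) / 2 * ‖x - y‖ ^ 2 + (s - t) / 2 * (‖x‖ ^ 2 - ‖y‖ ^ 2) := by
  rw [norm_sub_sq_real]
  simp only [inner_sub_left, inner_sub_right, real_inner_smul_left,
    real_inner_self_eq_norm_sq, real_inner_comm y x]
  ring

lemma half_add_rpow_mul_norm_sub_sq_le_inner {r : ℝ} (hr : 0 ≤ r) (x y : E) :
    (‖x‖ ^ r + ‖y‖ ^ r) / 2 * ‖x - y‖ ^ 2 ≤
      inner ℝ (‖x‖ ^ r • x - ‖y‖ ^ r • y) (x - y) := by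
  rw [inner_smul_sub_smul_sub_eq, le_add_iff_nonneg_right, div_mul_eq_mul_div]
  have := rpow_sub_rpow_mul_sq_sub_sq_nonneg (norm_nonneg x) (norm_nonneg y) hr
  positivity

end InnerProductSpace

theorem simon_inequality_general (N : ℕ) (p : ℝ) (hp : 2 ≤ p)
    (x y : EuclideanSpace ℝ (Fin N)) :
    (4 : ℝ) ^ (1 - p) * ‖x - y‖ ^ p ≤
      (inner ℝ (‖x‖ ^ (p - 2) • x - ‖y‖ ^ (p - 2) • y) (x - y) : ℝ) := by
  set w := (‖x‖ ^ (p - 2) + ‖y‖ ^ (p - 2)) * ‖x - y‖ ^ 2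
  calc (4 : ℝ) ^ (1 - p) * ‖x - y‖ ^ p ≤ (4 : ℝ) ^ (1 - p) * (2 ^ (p - 2) * w) := by
        gcongr
        exact (norm_sub_rpow_le hp x y).trans_eq (mul_assoc _ _ _)
    _ = (4 : ℝ) ^ (1 - p) * 2 ^ (p - 2) * w := by ring
    _ ≤ 1 / 2 * w := by gcongr; exact four_rpow_one_sub_mul_two_rpow_sub_two_le hp
    _ ≤ inner ℝ (‖x‖ ^ (p - 2) • x - ‖y‖ ^ (p - 2) • y) (x - y) := by
        have := half_add_rpow_mul_norm_sub_sq_le_inner (by linarith : 0 ≤ p - 2) x y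
        linarith

/-- Simon-type inequality: for `p ≥ 2` and all `x, y ∈ ℝ^N`,
`⟨|x|^{p-2} x - |y|^{p-2} y, x - y⟩ ≥ 4^{1-p} |x - y|^p`. -/
theorem simon_inequality (N : ℕ) (hN : 1 ≤ N) (p : ℝ) (hp : 2 ≤ p)
    (x y : EuclideanSpace ℝ (Fin N)) :
    (4 : ℝ) ^ (1 - p) * ‖x - y‖ ^ p ≤
      (inner ℝ (‖x‖ ^ (p - 2) • x - ‖y‖ ^ (p - 2) • y) (x - y) : ℝ) :=
  simon_inequality_general N p hp x y
end
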